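/- arXiv:1903.07462 — 2 statements merged into one kernel-verified Lean document; each statement's English description precedes it below -/
import Mathlib

section
/- Antitonicity of the set of safe inputs: for nonempty finite sets of states S₁ ⊆ S₂ with S₂ online determinable, every input that is safe for S₂ is also safe for S₁, i.e., ψ(S₂) ⊆ ψ(S₁). -/
/-!
Online determinability passes to nonempty subsets: by induction on a derivation of `Det T₂`,
an input injective on `T₂` is injective on `T₁ ⊆ T₂`, and `ζ(T₁, i, o) ⊆ ζ(T₂, i, o)`.
Both conditions defining a safe input for `T₂` therefore transfer to `T₁`.
-/

variable {I S O : Type} [Fintype I] [Fintype S] [Fintype O]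
  [DecidableEq I] [DecidableEq S] [DecidableEq O]

/-- Output sequence generated from state `s` by input word `w`. -/
def Hout (sig : I → S → S) (rho : S → O) : S → List I → List O
  | s, [] => [rho s]
  | s, i :: w => rho s :: Hout sig rho (sig i s) w

/-- Derivation function: successors of `T` under input `i` producing output `o`. -/
def zeta (sig : I → S → S) (rho : S → O) (T : Finset S) (i : I) (o : O) : Finset S :=
  (T.image (sig i)).filter (fun s' => rho s' = o)

/-- Online determinability of a finite set of states. -/
inductive Det (sig : I → S → S) (rho : S → O) : Finset S → Prop
  | single (T : Finset S) (h : T.card = 1) : Det sig rho T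
  | step (T : Finset S) (i : I) (hinj : (T.image (sig i)).card = T.card)
      (h : ∀ o : O, (zeta sig rho T i o).Nonempty → Det sig rho (zeta sig rho T i o)) :
      Det sig rho T

/-- Safe inputs for a set of states. -/
def psi (sig : I → S → S) (rho : S → O) (T : Finset S) : Set I :=
  {i | (T.image (sig i)).card = T.card ∧
    ∀ o : O, (zeta sig rho T i o).Nonempty → Det sig rho (zeta sig rho T i o)}

set_option linter.unusedSectionVars false

theorem Finset.card_image_eq_of_subset {α β : Type*} [DecidableEq β] {f : α → β}
    {s t : Finset α} (hst : s ⊆ t) (ht : (t.image f).card = t.card) :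
    (s.image f).card = s.card :=
  Finset.card_image_of_injOn ((Finset.injOn_of_card_image_eq ht).mono hst)

theorem zeta_mono (sig : I → S → S) (rho : S → O) {T₁ T₂ : Finset S} (h : T₁ ⊆ T₂)
    (i : I) (o : O) : zeta sig rho T₁ i o ⊆ zeta sig rho T₂ i o :=
  Finset.filter_subset_filter _ (Finset.image_subset_image h)

theorem Det.of_subset {sig : I → S → S} {rho : S → O} {T₂ : Finset S}
    (hdet : Det sig rho T₂) {T₁ : Finset S} (hsub : T₁ ⊆ T₂) (hne : T₁.Nonempty) :
    Det sig rho T₁ := by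
  induction hdet generalizing T₁ with
  | single T hcard =>
    exact .single T₁ (le_antisymm (hcard ▸ Finset.card_le_card hsub) hne.card_pos)
  | step T i hinj _ ih =>
    refine .step T₁ i (Finset.card_image_eq_of_subset hsub hinj) fun o ho => ?_
    have hzeta := zeta_mono sig rho hsub i o
    exact ih o (ho.mono hzeta) hzeta ho

theorem psi_antitone_general (sig : I → S → S) (rho : S → O) (T1 T2 : Finset S)
    (hsub : T1 ⊆ T2) :
    psi sig rho T2 ⊆ psi sig rho T1 := by
  rintro i ⟨hinj, hsafe⟩
  refine ⟨Finset.card_image_eq_of_subset hsub hinj, fun o ho => ?_⟩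
  have hzeta := zeta_mono sig rho hsub i o
  exact (hsafe o (ho.mono hzeta)).of_subset hzeta ho

theorem psi_antitone (sig : I → S → S) (rho : S → O) (T1 T2 : Finset S)
    (hsub : T1 ⊆ T2) (hne : T1.Nonempty) (hdet : Det sig rho T2) :
    psi sig rho T2 ⊆ psi sig rho T1 :=
  psi_antitone_general sig rho T1 T2 hsub
end

section
/- Online observability implies Type-I observability: if for every output o the nonempty set { s | ρ s = o } is online determinable, then for every state s there exists an input word w such that for all s' ≠ s, H(s', w) ≠ H(s, w). -/
variable {I S O : Type} [Fintype I] [Fintype S] [Fintype O]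
  [DecidableEq I] [DecidableEq S] [DecidableEq O]

/-! By induction on `Det`, every state `s` of a determinable set `T` has a word separating it
from the other states of `T`. For a safe input `i`, `σ i` is injective on `T`, so a word separating
`σ i s` inside its output class `ζ(T, i, ρ (σ i s))` separates it in all of `σ i '' T` (states with
another output differ at the first letter), and prefixing `i` separates `s` in `T`. The theorem is
the case of the output class of `s`. -/

section Separation

omit [Fintype I] [Fintype S] [Fintype O] [DecidableEq I]

variable (sig : I → S → S) (rho : S → O)

def Separates (T : Finset S) (s : S) (w : List I) : Prop :=
  ∀ s' ∈ T, s' ≠ s → Hout sig rho s' w ≠ Hout sig rho s w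

omit [DecidableEq S] [DecidableEq O] in
theorem Hout_ne_of_rho_ne {s s' : S} (h : rho s' ≠ rho s) (w : List I) :
    Hout sig rho s' w ≠ Hout sig rho s w := by
  cases w <;> simp [Hout, h]

omit [DecidableEq S] in
theorem Separates.of_filter_rho {T : Finset S} {s : S} {w : List I}
    (h : Separates sig rho (T.filter fun t => rho t = rho s) s w) : Separates sig rho T s w := by
  intro s' hs' hne
  by_cases hrho : rho s' = rho s
  · exact h s' (Finset.mem_filter.mpr ⟨hs', hrho⟩) hne
  · exact Hout_ne_of_rho_ne sig rho hrho w

omit [DecidableEq O] in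
theorem Separates.cons {T : Finset S} {s : S} {i : I} {w : List I} (hinj : Set.InjOn (sig i) T)
    (hs : s ∈ T) (h : Separates sig rho (T.image (sig i)) (sig i s) w) :
    Separates sig rho T s (i :: w) := by
  intro s' hs' hne heq
  simp only [Hout, List.cons.injEq] at heq
  exact h (sig i s') (Finset.mem_image_of_mem _ hs') (hinj.ne hs' hs hne) heq.2

theorem Det.exists_separates {T : Finset S} (hT : Det sig rho T) :
    ∀ s ∈ T, ∃ w, Separates sig rho T s w := by
  induction hT with
  | single T hcard =>
    exact fun s hs => ⟨[], fun s' hs' hne => absurd (Finset.card_le_one.mp hcard.le s' hs' s hs) hne⟩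
  | step T i hinj _ ih =>
    intro s hs
    have hmem : sig i s ∈ zeta sig rho T i (rho (sig i s)) :=
      Finset.mem_filter.mpr ⟨Finset.mem_image_of_mem _ hs, rfl⟩
    obtain ⟨w, hw⟩ := ih _ ⟨_, hmem⟩ _ hmem
    exact ⟨i :: w, (hw.of_filter_rho sig rho).cons sig rho (Finset.card_image_iff.mp hinj) hs⟩

end Separation

theorem online_implies_typeI (sig : I → S → S) (rho : S → O)
    (honline : ∀ o : O, (Finset.univ.filter (fun s : S => rho s = o)).Nonempty →
      Det sig rho (Finset.univ.filter (fun s : S => rho s = o))) :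
    ∀ s : S, ∃ w : List I, ∀ s' : S, s' ≠ s →
      Hout sig rho s' w ≠ Hout sig rho s w := by
  intro s
  have hs : s ∈ Finset.univ.filter (fun t : S => rho t = rho s) := by simp
  obtain ⟨w, hw⟩ := (honline (rho s) ⟨s, hs⟩).exists_separates sig rho s hs
  exact ⟨w, fun s' hne => hw.of_filter_rho sig rho s' (Finset.mem_univ s') hne⟩
end
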